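/- arXiv:math/0406257 — 6 statements merged into one kernel-verified Lean document; each statement's English description precedes it below -/
import Mathlib

section
/- Let H : ℂ → ℂ be holomorphic on an open neighborhood U of 0 with H(0) = 0. Assume that H(z) is real for every real z ∈ U, and that every z ∈ U with H(z) real is itself real. Then H'(0) ≠ 0. -/
open Complex Filter Set

private lemma im_exp_mul_aux (φ : ℝ) (c : ℂ) : (Complex.exp (φ * Complex.I) * c).im
    = ‖c‖ * Real.sin (φ + Complex.arg c) := by
  conv_lhs => rw [← Complex.norm_mul_exp_arg_mul_I c]
  have h : Complex.exp (↑φ * I) * (↑‖c‖ * Complex.exp (↑(Complex.arg c) * I))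
      = ↑‖c‖ * Complex.exp ((↑(φ + Complex.arg c) : ℝ) * I) := by
    rw [mul_left_comm, ← Complex.exp_add]; push_cast; ring_nf
  rw [h, Complex.im_ofReal_mul]
  rw [Complex.exp_ofReal_mul_I_im]

private lemma abs_im_exp_mul_aux (w : ℂ) (φ : ℝ) :
    |(Complex.exp (φ * Complex.I) * w).im| ≤ ‖w‖ := by
  calc |(Complex.exp (φ * Complex.I) * w).im| ≤ ‖Complex.exp (φ * Complex.I) * w‖ :=
        Complex.abs_im_le_norm _
    _ = ‖w‖ := by simp [Complex.norm_exp_ofReal_mul_I]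

set_option maxHeartbeats 1000000 in
/-- Key contradiction lemma: if `H z = z^n g z` near `0` with `g 0 ≠ 0` and `n ≥ 2`,
then `H` maps some non-real point of `U` to a real point. -/
private lemma key_aux (U : Set ℂ) (hUopen : IsOpen U) (hU0 : (0 : ℂ) ∈ U) (H g : ℂ → ℂ)
    (hH : AnalyticOnNhd ℂ H U) (hg : AnalyticAt ℂ g 0) (hg0 : g 0 ≠ 0)
    (n : ℕ) (hn : 2 ≤ n) (hEq : ∀ᶠ z in nhds 0, H z = z ^ n * g z)
    (hreal' : ∀ z ∈ U, (H z).im = 0 → z.im = 0) : False := by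
  set c := g 0 with hc
  set R := ‖c‖ with hR
  have hRpos : 0 < R := by simpa [hR] using hg0
  -- eventually `|g z - c| < R/2`
  have hcont : ∀ᶠ z in nhds (0 : ℂ), ‖g z - c‖ < R / 2 := by
    have := hg.continuousAt.tendsto
    have hmem : Metric.ball c (R / 2) ∈ nhds c := Metric.ball_mem_nhds _ (by positivity)
    filter_upwards [this hmem] with z hz
    simpa [Metric.mem_ball, Complex.dist_eq] using hz
  have hS : ∀ᶠ z in nhds (0 : ℂ), z ∈ U ∧ H z = z ^ n * g z ∧ ‖g z - c‖ < R / 2 :=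
    ((hUopen.eventually_mem hU0).and (hEq.and hcont))
  obtain ⟨r, hrpos, hball⟩ := Metric.eventually_nhds_iff_ball.mp hS
  set t := r / 2 with htdef
  have ht : 0 < t := by positivity
  have htr : t < r := by simp only [htdef]; linarith
  -- the circle of radius t
  set z : ℝ → ℂ := fun θ => (t : ℂ) * Complex.exp (θ * Complex.I) with hzdef
  have hzball : ∀ θ : ℝ, z θ ∈ Metric.ball (0 : ℂ) r := by
    intro θ
    simp only [Metric.mem_ball, Complex.dist_eq, sub_zero, hzdef, norm_mul,
      Complex.norm_exp_ofReal_mul_I, Complex.norm_real, Real.norm_eq_abs, mul_one, abs_of_pos ht]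
    exact htr
  set a := Complex.arg c with ha
  have haI : a ∈ Set.Ioc (-Real.pi) Real.pi := Complex.arg_mem_Ioc c
  have hpi : (0:ℝ) < Real.pi := Real.pi_pos
  -- two angles
  set s₁ : ℝ := if a < Real.pi / 2 then Real.pi / 2 - a else Real.pi / 2 - a + 2 * Real.pi with hs₁
  set s₂ : ℝ := if a < -(Real.pi / 2) then -(Real.pi / 2) - a else -(Real.pi / 2) - a + 2 * Real.pi
    with hs₂
  have hs₁pos : 0 < s₁ ∧ s₁ ≤ 2 * Real.pi := by
    rcases haI with ⟨h1, h2⟩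
    rw [hs₁]; split_ifs with h <;> constructor <;> linarith
  have hs₂pos : 0 < s₂ ∧ s₂ ≤ 2 * Real.pi := by
    rcases haI with ⟨h1, h2⟩
    rw [hs₂]; split_ifs with h <;> constructor <;> linarith
  have hsin₁ : Real.sin (s₁ + a) = 1 := by
    rw [hs₁]; split_ifs with h
    · rw [show Real.pi / 2 - a + a = Real.pi / 2 by ring, Real.sin_pi_div_two]
    · rw [show Real.pi / 2 - a + 2 * Real.pi + a = Real.pi / 2 + 2 * Real.pi by ring,
        Real.sin_add_two_pi, Real.sin_pi_div_two]
  have hsin₂ : Real.sin (s₂ + a) = -1 := by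
    rw [hs₂]; split_ifs with h
    · rw [show -(Real.pi / 2) - a + a = -(Real.pi / 2) by ring, Real.sin_neg,
        Real.sin_pi_div_two]
    · rw [show -(Real.pi / 2) - a + 2 * Real.pi + a = -(Real.pi / 2) + 2 * Real.pi by ring,
        Real.sin_add_two_pi, Real.sin_neg, Real.sin_pi_div_two]
  have hnR : (0:ℝ) < n := by positivity
  set θ₁ : ℝ := s₁ / n with hθ₁def
  set θ₂ : ℝ := s₂ / n with hθ₂def
  have hθ₁pos : 0 < θ₁ := div_pos hs₁pos.1 hnR
  have hθ₂pos : 0 < θ₂ := div_pos hs₂pos.1 hnR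
  have hn2 : (2:ℝ) ≤ n := by exact_mod_cast hn
  have hθ₁le : θ₁ ≤ Real.pi := by
    rw [hθ₁def, div_le_iff₀ hnR]
    calc s₁ ≤ 2 * Real.pi := hs₁pos.2
      _ ≤ Real.pi * n := by nlinarith
  have hθ₂le : θ₂ ≤ Real.pi := by
    rw [hθ₂def, div_le_iff₀ hnR]
    calc s₂ ≤ 2 * Real.pi := hs₂pos.2
      _ ≤ Real.pi * n := by nlinarith
  have hnθ₁ : (n:ℝ) * θ₁ = s₁ := by rw [hθ₁def]; field_simp
  have hnθ₂ : (n:ℝ) * θ₂ = s₂ := by rw [hθ₂def]; field_simp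
  -- value of Im ∘ H on the circle
  set f : ℝ → ℝ := fun θ => (H (z θ)).im with hfdef
  have hval : ∀ θ : ℝ, f θ = t ^ n * (R * Real.sin ((n:ℝ) * θ + a)
      + (Complex.exp ((↑((n:ℝ) * θ) : ℝ) * Complex.I) * (g (z θ) - c)).im) := by
    intro θ
    have hmem := hball _ (hzball θ)
    have hpow : (z θ) ^ n = (↑(t ^ n) : ℂ) * Complex.exp ((↑((n:ℝ) * θ) : ℝ) * Complex.I) := by
      rw [hzdef, mul_pow, ← Complex.exp_nat_mul]
      push_cast; ring_nf
    have : H (z θ) = (↑(t ^ n) : ℂ) * (Complex.exp ((↑((n:ℝ) * θ) : ℝ) * Complex.I) * c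
        + Complex.exp ((↑((n:ℝ) * θ) : ℝ) * Complex.I) * (g (z θ) - c)) := by
      rw [hmem.2.1, hpow]; ring
    rw [hfdef]
    simp only [this, Complex.im_ofReal_mul, Complex.add_im]
    rw [im_exp_mul_aux]
  -- f θ₁ > 0
  have htn : 0 < t ^ n := pow_pos ht n
  have hf₁ : 0 < f θ₁ := by
    rw [hval θ₁, hnθ₁, hsin₁]
    have hb := abs_le.mp (abs_im_exp_mul_aux (g (z θ₁) - c) s₁)
    have hlt := (hball _ (hzball θ₁)).2.2
    nlinarith [hb.1, hb.2]
  have hf₂ : f θ₂ < 0 := by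
    rw [hval θ₂, hnθ₂, hsin₂]
    have hb := abs_le.mp (abs_im_exp_mul_aux (g (z θ₂) - c) s₂)
    have hlt := (hball _ (hzball θ₂)).2.2
    nlinarith [hb.1, hb.2]
  -- continuity and IVT
  have hzc : Continuous z := by
    rw [hzdef]; fun_prop
  have hfc : ContinuousOn f (Set.uIcc θ₁ θ₂) := by
    apply Complex.continuous_im.comp_continuousOn
    exact (hH.continuousOn).comp hzc.continuousOn (fun θ _ => (hball _ (hzball θ)).1)
  have h0mem : (0:ℝ) ∈ Set.uIcc (f θ₁) (f θ₂) :=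
    Set.mem_uIcc.mpr (Or.inr ⟨hf₂.le, hf₁.le⟩)
  obtain ⟨θ, hθmem, hθ0⟩ := intermediate_value_uIcc hfc h0mem
  have hθne₁ : θ ≠ θ₁ := fun h => absurd (h ▸ hθ0) (ne_of_gt hf₁)
  have hθne₂ : θ ≠ θ₂ := fun h => absurd (h ▸ hθ0) (ne_of_lt hf₂)
  rw [Set.uIcc_eq_union] at hθmem
  have hθpos : 0 < θ := by
    rcases hθmem with h | h
    · exact lt_of_lt_of_le hθ₁pos h.1
    · exact lt_of_lt_of_le hθ₂pos h.1
  have hθlt : θ < Real.pi := by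
    rcases hθmem with h | h
    · rcases lt_or_eq_of_le h.2 with h' | h'
      · exact lt_of_lt_of_le h' hθ₂le
      · exact absurd h' hθne₂
    · rcases lt_or_eq_of_le h.2 with h' | h'
      · exact lt_of_lt_of_le h' hθ₁le
      · exact absurd h' hθne₁
  -- contradiction
  have hzU : z θ ∈ U := (hball _ (hzball θ)).1
  have him : (z θ).im = 0 := hreal' _ hzU hθ0
  have : (z θ).im = t * Real.sin θ := by
    rw [hzdef, Complex.im_ofReal_mul, Complex.exp_ofReal_mul_I_im]
  rw [this] at him
  have hsinpos : 0 < Real.sin θ := Real.sin_pos_of_pos_of_lt_pi hθpos hθlt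
  nlinarith

/-- **One-variable case of Proposition 6.2.**  If `H` is holomorphic on an open
neighborhood `U` of `0` with `H 0 = 0`, maps real points of `U` to real points, and every
point of `U` with real image is real, then `H' (0) ≠ 0`. -/
theorem stmt_1 (U : Set ℂ) (hUopen : IsOpen U) (hU0 : (0 : ℂ) ∈ U) (H : ℂ → ℂ)
    (hH : AnalyticOnNhd ℂ H U) (hH0 : H 0 = 0)
    (hreal : ∀ z ∈ U, z.im = 0 → (H z).im = 0)
    (hreal' : ∀ z ∈ U, (H z).im = 0 → z.im = 0) :
    deriv H 0 ≠ 0 := by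
  intro hd
  have hA : AnalyticAt ℂ H 0 := hH 0 hU0
  rcases hA.eventually_eq_zero_or_eventually_ne_zero with h0 | hne
  · -- H vanishes identically near 0: any nearby purely imaginary point contradicts hreal'
    have hE : ∀ᶠ x in nhds (0:ℂ), x ∈ U ∧ H x = 0 := (hUopen.eventually_mem hU0).and h0
    have hcont : Continuous fun s : ℝ => (s : ℂ) * Complex.I := by fun_prop
    have htt : Filter.Tendsto (fun s : ℝ => (s : ℂ) * Complex.I) (nhds 0) (nhds 0) := by
      simpa using hcont.tendsto 0
    have hpull : ∀ᶠ s : ℝ in nhds 0, ((s:ℂ) * Complex.I ∈ U ∧ H ((s:ℂ) * Complex.I) = 0) :=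
      htt.eventually hE
    have hpull' : ∀ᶠ s : ℝ in nhdsWithin (0:ℝ) ({(0:ℝ)}ᶜ : Set ℝ),
        ((s:ℂ) * Complex.I ∈ U ∧ H ((s:ℂ) * Complex.I) = 0) :=
      hpull.filter_mono nhdsWithin_le_nhds
    obtain ⟨s, hs, hsne⟩ := (hpull'.and eventually_mem_nhdsWithin).exists
    have : ((s:ℂ) * Complex.I).im = 0 := hreal' _ hs.1 (by rw [hs.2]; simp)
    simp only [Complex.im_ofReal_mul, Complex.I_im, mul_one] at this
    exact (Set.mem_compl_singleton_iff.mp hsne) this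
  · -- finite order
    have hord : analyticOrderAt H 0 ≠ ⊤ := by
      intro h
      have h0 := (analyticOrderAt_eq_top).mp h
      obtain ⟨x, hx1, hx2⟩ := ((h0.filter_mono nhdsWithin_le_nhds).and hne).exists
      exact hx2 hx1
    obtain ⟨n, hn⟩ := WithTop.ne_top_iff_exists.mp hord
    obtain ⟨g, hg, hg0, hEq⟩ := (hA.analyticOrderAt_eq_natCast).mp hn.symm
    simp only [sub_zero, smul_eq_mul] at hEq
    match n with
    | 0 =>
      have := hEq.self_of_nhds
      simp only [pow_zero, one_mul, hH0] at this
      exact hg0 this.symm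
    | 1 =>
      have heq' : H =ᶠ[nhds (0:ℂ)] fun z => z * g z := by
        filter_upwards [hEq] with x hx; simpa [pow_one] using hx
      have hder : HasDerivAt (fun z : ℂ => z * g z) (1 * g 0 + 0 * deriv g 0) 0 :=
        (hasDerivAt_id 0).mul hg.differentiableAt.hasDerivAt
      have : deriv H 0 = g 0 := by
        rw [heq'.deriv_eq, hder.deriv]; ring
      rw [hd] at this
      exact hg0 this.symm
    | (m + 2) =>
      exact key_aux U hUopen hU0 H g hH hg hg0 (m + 2) (by omega) hEq hreal'
end

section
/- Let h : ℂ → ℂ be holomorphic on an open neighborhood U of 0, not constant on any neighborhood of 0, with h(0) = 0 and h'(0) = 0. Then every neighborhood of 0 contains a point z with nonzero imaginary part such that h(z) is real. -/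
open Complex Filter Real
open scoped Topology

/-- **Key one-dimensional step in Proposition 6.2.**  If `h` is holomorphic on an open
neighborhood `U` of `0`, is not constant on any neighborhood of `0`, and satisfies
`h 0 = 0` and `h' 0 = 0`, then every neighborhood of `0` contains a point with nonzero
imaginary part whose image under `h` is real. -/
theorem stmt_3 (U : Set ℂ) (hUopen : IsOpen U) (hU0 : (0 : ℂ) ∈ U) (h : ℂ → ℂ)
    (hh : AnalyticOnNhd ℂ h U)
    (hnc : ∀ V ∈ nhds (0 : ℂ), ¬ ∀ z ∈ V, h z = h 0)
    (hh0 : h 0 = 0) (hd0 : deriv h 0 = 0) :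
    ∀ W ∈ nhds (0 : ℂ), ∃ z ∈ W, z.im ≠ 0 ∧ (h z).im = 0 := by
  intro W hW
  by_contra hcon
  push_neg at hcon
  have hA : AnalyticAt ℂ h 0 := hh 0 hU0
  -- the order of vanishing is a finite natural number k
  have hne : analyticOrderAt h 0 ≠ ⊤ := by
    intro htop
    have hev := (analyticOrderAt_eq_top).mp htop
    obtain ⟨V, hV, hV'⟩ := Filter.eventually_iff_exists_mem.mp hev
    exact hnc V hV fun z hz => by rw [hh0]; exact hV' z hz
  obtain ⟨k, hk⟩ : ∃ k : ℕ, analyticOrderAt h 0 = (k : ℕ∞) := by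
    obtain ⟨k, hk⟩ := WithTop.ne_top_iff_exists.mp hne
    exact ⟨k, hk.symm⟩
  obtain ⟨g, hg, hg0, hhg⟩ := (hA.analyticOrderAt_eq_natCast (n := k)).mp hk
  have hhg' : ∀ᶠ z in 𝓝 (0 : ℂ), h z = z ^ k * g z := by
    filter_upwards [hhg] with z hz
    simpa [smul_eq_mul] using hz
  -- k ≠ 0
  have hk0 : k ≠ 0 := by
    intro hk'
    subst hk'
    have := hhg'.self_of_nhds
    simp [hh0] at this
    exact hg0 this.symm
  -- k ≠ 1
  have hk1 : k ≠ 1 := by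
    intro hk'
    subst hk'
    have hEq : deriv h 0 = deriv (fun z => z * g z) 0 := by
      apply Filter.EventuallyEq.deriv_eq
      filter_upwards [hhg'] with z hz
      simpa using hz
    have hder : HasDerivAt (fun z => z * g z) (1 * g 0 + 0 * deriv g 0) 0 :=
      (hasDerivAt_id (0:ℂ)).mul hg.differentiableAt.hasDerivAt
    rw [hEq, hder.deriv] at hd0
    simp at hd0
    exact hg0 hd0
  have hk2 : 2 ≤ k := by omega
  -- construct an analytic k-th root r of g near 0
  set c : ℂ := g 0 with hc_def
  have hc : c ≠ 0 := hg0
  set ζ : ℂ := c ^ ((k : ℂ)⁻¹) with hζ_def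
  have hζk : ζ ^ k = c := Complex.cpow_nat_inv_pow c hk0
  have hζ0 : ζ ≠ 0 := by
    intro hz
    rw [hz, zero_pow hk0] at hζk
    exact hc hζk.symm
  set r : ℂ → ℂ := fun z => ζ * Complex.exp (Complex.log (g z / c) * (k : ℂ)⁻¹) with hr_def
  have hr : AnalyticAt ℂ r 0 := by
    apply analyticAt_const.mul
    apply AnalyticAt.cexp
    apply AnalyticAt.mul _ analyticAt_const
    apply AnalyticAt.clog (hg.div analyticAt_const hc)
    show g 0 / c ∈ Complex.slitPlane
    rw [← hc_def, div_self hc]; simp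
  have hr0 : r 0 = ζ := by
    simp only [hr_def]; rw [← hc_def, div_self hc]; simp
  have hrk : ∀ᶠ z in 𝓝 (0 : ℂ), r z ^ k = g z := by
    filter_upwards [hg.continuousAt.eventually_ne hg0] with z hz
    have h1 : Complex.exp (Complex.log (g z / c) * (k : ℂ)⁻¹) ^ k = g z / c := by
      rw [← Complex.exp_nat_mul]
      have hkC : (k : ℂ) ≠ 0 := Nat.cast_ne_zero.mpr hk0
      have : (k : ℂ) * (Complex.log (g z / c) * (k : ℂ)⁻¹) = Complex.log (g z / c) := by
        rw [mul_comm, mul_assoc, inv_mul_cancel₀ hkC, mul_one]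
      rw [this, Complex.exp_log (div_ne_zero hz hc)]
    calc r z ^ k = ζ ^ k * Complex.exp (Complex.log (g z / c) * (k : ℂ)⁻¹) ^ k := by
          rw [hr_def]; ring
      _ = c * (g z / c) := by rw [hζk, h1]
      _ = g z := by field_simp
  -- φ = z * r z, a local biholomorphism with h z = φ z ^ k near 0
  set φ : ℂ → ℂ := fun z => z * r z with hφ_def
  have hφ0 : φ 0 = 0 := by simp [hφ_def]
  obtain ⟨p, hp⟩ := hr
  have hrd : HasStrictDerivAt r (deriv r 0) 0 := by
    have := hp.hasStrictDerivAt
    rwa [hp.deriv]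
  have hφd : HasStrictDerivAt φ ζ 0 := by
    have := (hasStrictDerivAt_id (0 : ℂ)).mul hrd
    simp [hr0] at this ⊢; exact this
  -- the local inverse ψ
  set ψ : ℂ → ℂ := hφd.localInverse φ ζ 0 hζ0 with hψ_def
  have hψd : HasStrictDerivAt ψ ζ⁻¹ 0 := by
    have := hφd.to_localInverse (hf' := hζ0)
    rwa [hφ0] at this
  have hψ0 : ψ 0 = 0 := by
    have := (hφd.hasStrictFDerivAt_equiv hζ0).localInverse_apply_image
    rwa [hφ0] at this
  have hψtendsto : Filter.Tendsto ψ (𝓝 0) (𝓝 (0 : ℂ)) := by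
    have := hψd.hasDerivAt.continuousAt
    rwa [ContinuousAt, hψ0] at this
  have hright : ∀ᶠ w in 𝓝 (0 : ℂ), φ (ψ w) = w := by
    have := (hφd.hasStrictFDerivAt_equiv hζ0).eventually_right_inverse
    rwa [hφ0] at this
  -- h z = φ z ^ k near 0
  have hhφ : ∀ᶠ z in 𝓝 (0 : ℂ), h z = φ z ^ k := by
    filter_upwards [hhg', hrk] with z h1 h2
    rw [h1, hφ_def]
    rw [mul_pow, h2]
  -- the key eventual implication
  have hkey : ∀ᶠ w in 𝓝 (0 : ℂ), (w ^ k).im = 0 → (ψ w).im = 0 := by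
    have hWev : ∀ᶠ z in 𝓝 (0 : ℂ), z ∈ W := hW
    have hmem : ∀ᶠ w in 𝓝 (0 : ℂ), ψ w ∈ W := hψtendsto.eventually hWev
    filter_upwards [hmem, hright, hψtendsto.eventually hhφ] with w hw1 hw2 hw3 hw4
    by_contra him
    exact hcon (ψ w) hw1 him (by rw [hw3, hw2]; exact hw4)
  -- along a ray of direction e whose k-th powers are real, ψ stays real
  have ray : ∀ e : ℂ, (∀ t : ℝ, (((t : ℂ) * e) ^ k).im = 0) → (ζ⁻¹ * e).im = 0 := by
    intro e he
    have hte : Filter.Tendsto (fun t : ℝ => (t : ℂ) * e) (𝓝 0) (𝓝 (0 : ℂ)) := by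
      have hcont : Continuous fun t : ℝ => (t : ℂ) * e :=
        Complex.continuous_ofReal.mul continuous_const
      simpa using hcont.tendsto 0
    have h0 : ∀ᶠ t : ℝ in 𝓝 0, (ψ ((t : ℂ) * e)).im = 0 := by
      filter_upwards [hte.eventually hkey] with t ht
      exact ht (he t)
    -- derivative of t ↦ (ψ (t * e)).im at 0 is (ζ⁻¹ * e).im
    have hline : HasDerivAt (fun t : ℝ => (t : ℂ) * e) e 0 := by
      simpa using (Complex.ofRealCLM.hasDerivAt (x := (0:ℝ))).mul_const e
    have hψd' : HasDerivAt ψ ζ⁻¹ (((0:ℝ) : ℂ) * e) := by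
      simp only [Complex.ofReal_zero, zero_mul]
      exact hψd.hasDerivAt
    have hcomp : HasDerivAt (fun t : ℝ => ψ ((t : ℂ) * e)) (e * ζ⁻¹) 0 := by
      have := hψd'.scomp (0:ℝ) hline
      simp [Function.comp, smul_eq_mul] at this ⊢; exact this
    have him : HasDerivAt (fun t : ℝ => (ψ ((t : ℂ) * e)).im) ((e * ζ⁻¹).im) 0 := by
      have := Complex.imCLM.hasFDerivAt.comp_hasDerivAt 0 hcomp
      simp at this ⊢; exact this
    have hzero : HasDerivAt (fun t : ℝ => (ψ ((t : ℂ) * e)).im) 0 0 := by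
      have : (fun t : ℝ => (ψ ((t : ℂ) * e)).im) =ᶠ[𝓝 (0:ℝ)] fun _ => (0:ℝ) := h0
      exact (hasDerivAt_const (0:ℝ) (0:ℝ)).congr_of_eventuallyEq this
    have := him.unique hzero
    rw [mul_comm] at this
    exact this
  -- apply to e = 1 and e = exp(π/k · I)
  have h1 : (ζ⁻¹).im = 0 := by
    have := ray 1 fun t => by
      rw [mul_one, ← Complex.ofReal_pow]
      exact Complex.ofReal_im _
    simpa using this
  set e : ℂ := Complex.exp ((↑(π / k) : ℂ) * Complex.I) with he_def
  have hek : e ^ k = -1 := by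
    rw [he_def, ← Complex.exp_nat_mul]
    have : (k : ℂ) * ((↑(π / k) : ℂ) * Complex.I) = ↑π * Complex.I := by
      push_cast
      have : (k : ℂ) ≠ 0 := Nat.cast_ne_zero.mpr hk0
      field_simp
    rw [this, Complex.exp_pi_mul_I]
  have h2 : (ζ⁻¹ * e).im = 0 := by
    apply ray
    intro t
    rw [mul_pow, hek]
    simp [← Complex.ofReal_pow]
  have heim : e.im = Real.sin (π / k) := by
    rw [he_def]
    exact Complex.exp_ofReal_mul_I_im _
  have hsin : 0 < Real.sin (π / k) := by
    apply Real.sin_pos_of_pos_of_lt_pi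
    · positivity
    · calc π / k ≤ π / 2 := by
            apply div_le_div_of_nonneg_left pi_pos.le two_pos
            exact_mod_cast hk2
        _ < π := by linarith [pi_pos]
  have hζinv : ζ⁻¹ ≠ 0 := inv_ne_zero hζ0
  have hre : (ζ⁻¹).re ≠ 0 := by
    intro hre
    exact hζinv (Complex.ext hre h1)
  rw [Complex.mul_im, h1, heim, zero_mul, add_zero] at h2
  rcases mul_eq_zero.mp h2 with h2 | h2
  · exact hre h2
  · exact hsin.ne' h2
end

section
/- Let A : U → SL(2,ℂ) be a holomorphic family on an open neighborhood U of 0 ∈ ℂ, with Tr A(0) = 2 and A(0) ≠ I. Then there is an open neighborhood V ⊆ U of 0 such that either (a) Tr A(t) = 2 for all t ∈ V, in which case there is a holomorphic family C : V → SL(2,ℂ) with C(t)·A(t)·C(t)⁻¹ = A(0) for all t ∈ V; or (b) Tr A(t) ≠ 2 for all t ∈ V with t ≠ 0, in which case there is a holomorphic family C : V → SL(2,ℂ) such that for all t ∈ V, C(t)·A(t)·C(t)⁻¹ is the matrix with rows (u(t)/2, (u(t)² − 4)/2) and (1/2, u(t)/2), where u(t) = Tr A(t). -/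
open Matrix

/-- A family of matrices in `SL(2,ℂ)` parameterized by an open set `U ⊆ ℂ` is holomorphic
if each of its four entries is complex analytic on `U`. -/
def HolomorphicSL2Family (A : ℂ → Matrix.SpecialLinearGroup (Fin 2) ℂ) (U : Set ℂ) : Prop :=
  ∀ i j, AnalyticOnNhd ℂ (fun t => ((A t : Matrix (Fin 2) (Fin 2) ℂ) i j)) U

namespace CuspDefAux

noncomputable def Nmat (u : ℂ) : Matrix (Fin 2) (Fin 2) ℂ :=
  !![u/2, (u^2-4)/2; 1/2, u/2]

lemma Nmat_det (u : ℂ) : (Nmat u).det = 1 := by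
  simp [Nmat, Matrix.det_fin_two_of]; ring

lemma holo_const_mul (K : Matrix.SpecialLinearGroup (Fin 2) ℂ)
    {C : ℂ → Matrix.SpecialLinearGroup (Fin 2) ℂ} {V : Set ℂ}
    (h : HolomorphicSL2Family C V) : HolomorphicSL2Family (fun t => K * C t) V := by
  intro i j
  have heq : (fun t => ((K * C t : Matrix.SpecialLinearGroup (Fin 2) ℂ)
      : Matrix (Fin 2) (Fin 2) ℂ) i j)
      = fun t => (K : Matrix (Fin 2) (Fin 2) ℂ) i 0 * (C t : Matrix (Fin 2) (Fin 2) ℂ) 0 j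
        + (K : Matrix (Fin 2) (Fin 2) ℂ) i 1 * (C t : Matrix (Fin 2) (Fin 2) ℂ) 1 j := by
    funext t
    simp [Matrix.SpecialLinearGroup.coe_mul, Matrix.mul_apply, Fin.sum_univ_two]
  rw [heq]
  exact (analyticOnNhd_const.mul (h 0 j)).add (analyticOnNhd_const.mul (h 1 j))

lemma key (U : Set ℂ) (hUopen : IsOpen U) (hU0 : (0:ℂ) ∈ U)
    (A : ℂ → Matrix.SpecialLinearGroup (Fin 2) ℂ)
    (p : ℂ → ℂ) (Q : ℂ → Matrix (Fin 2) (Fin 2) ℂ)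
    (hp : AnalyticOnNhd ℂ p U)
    (hQ : ∀ i j, AnalyticOnNhd ℂ (fun t => Q t i j) U)
    (hp0 : p 0 ≠ 0)
    (hdetQ : ∀ t, (Q t).det = p t / 2)
    (hcomm : ∀ t, Q t * (A t : Matrix (Fin 2) (Fin 2) ℂ)
      = Nmat (Matrix.trace (A t : Matrix (Fin 2) (Fin 2) ℂ)) * Q t)
    (E : ℂ → Prop) (hE : ∀ᶠ t in nhds 0, E t) :
    ∃ V : Set ℂ, V ⊆ U ∧ IsOpen V ∧ (0:ℂ) ∈ V ∧ (∀ t ∈ V, E t) ∧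
      ∃ C : ℂ → Matrix.SpecialLinearGroup (Fin 2) ℂ, HolomorphicSL2Family C V ∧
        ∀ t ∈ V, ((C t * A t * (C t)⁻¹ : Matrix.SpecialLinearGroup (Fin 2) ℂ)
          : Matrix (Fin 2) (Fin 2) ℂ)
          = Nmat (Matrix.trace (A t : Matrix (Fin 2) (Fin 2) ℂ)) := by
  classical
  have hpc : ContinuousAt p 0 := (hp 0 hU0).continuousAt
  have hdivcont : ContinuousAt (fun t => p 0 / p t) 0 :=
    continuousAt_const.div hpc hp0
  have hdiv0 : p 0 / p 0 = 1 := div_self hp0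
  have hev : ∀ᶠ t in nhds 0, t ∈ U ∧ p t ≠ 0 ∧ p 0 / p t ∈ Complex.slitPlane ∧ E t := by
    have h1 : ∀ᶠ t in nhds 0, t ∈ U := hUopen.mem_nhds hU0
    have h2 : ∀ᶠ t in nhds 0, p t ≠ 0 := hpc.eventually_ne hp0
    have h3 : ∀ᶠ t in nhds 0, p 0 / p t ∈ Complex.slitPlane := by
      have : Complex.slitPlane ∈ nhds (p 0 / p 0) := by
        rw [hdiv0]; exact Complex.isOpen_slitPlane.mem_nhds Complex.one_mem_slitPlane
      exact hdivcont.eventually_mem this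
    filter_upwards [h1, h2, h3, hE] with t ht1 ht2 ht3 ht4
    exact ⟨ht1, ht2, ht3, ht4⟩
  rw [eventually_nhds_iff] at hev
  obtain ⟨V, hVall, hVopen, hV0⟩ := hev
  have hVU : V ⊆ U := fun t ht => (hVall t ht).1
  have hVp : ∀ t ∈ V, p t ≠ 0 := fun t ht => (hVall t ht).2.1
  have hVs : ∀ t ∈ V, p 0 / p t ∈ Complex.slitPlane := fun t ht => (hVall t ht).2.2.1
  have hVE : ∀ t ∈ V, E t := fun t ht => (hVall t ht).2.2.2
  set r : ℂ → ℂ :=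
    fun t => Complex.exp ((Complex.log (2 / p 0) + Complex.log (p 0 / p t)) / 2) with hr_def
  have hranal : AnalyticOnNhd ℂ r V := by
    intro t ht
    have hdiva : AnalyticAt ℂ (fun t => p 0 / p t) t :=
      analyticAt_const.div (hp t (hVU ht)) (hVp t ht)
    have hloga : AnalyticAt ℂ (fun t => Complex.log (p 0 / p t)) t :=
      hdiva.clog (hVs t ht)
    exact ((analyticAt_const.add hloga).div analyticAt_const two_ne_zero).cexp
  have hr2 : ∀ t ∈ V, r t ^ 2 = 2 / p t := by
    intro t ht
    have h1 : (2 : ℂ) / p 0 ≠ 0 := div_ne_zero two_ne_zero hp0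
    have h2 : p 0 / p t ≠ 0 := div_ne_zero hp0 (hVp t ht)
    have : r t ^ 2
        = Complex.exp (Complex.log (2 / p 0) + Complex.log (p 0 / p t)) := by
      rw [hr_def, ← Complex.exp_nat_mul]
      ring_nf
    rw [this, Complex.exp_add, Complex.exp_log h1, Complex.exp_log h2]
    field_simp
  have hdetM : ∀ t ∈ V, (r t • Q t).det = 1 := by
    intro t ht
    rw [Matrix.det_smul, hdetQ t]
    simp only [Fintype.card_fin]
    rw [hr2 t ht]
    field_simp
    exact div_self (hVp t ht)
  set C : ℂ → Matrix.SpecialLinearGroup (Fin 2) ℂ :=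
    fun t => if h : (r t • Q t).det = 1 then ⟨r t • Q t, h⟩ else 1 with hC_def
  have hCcoe : ∀ t ∈ V, (C t : Matrix (Fin 2) (Fin 2) ℂ) = r t • Q t := by
    intro t ht
    rw [hC_def]
    simp only [dif_pos (hdetM t ht)]
    simp [hdetM t ht]
  refine ⟨V, hVU, hVopen, hV0, hVE, C, ?_, ?_⟩
  · intro i j
    intro t ht
    have hanal : AnalyticAt ℂ (fun s => r s * Q s i j) t :=
      (hranal t ht).mul (hQ i j t (hVU ht))
    apply hanal.congr
    filter_upwards [hVopen.mem_nhds ht] with s hs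
    rw [hCcoe s hs]
    simp [Matrix.smul_apply]
  · intro t ht
    set u := Matrix.trace (A t : Matrix (Fin 2) (Fin 2) ℂ) with hu_def
    set Nel : Matrix.SpecialLinearGroup (Fin 2) ℂ := ⟨Nmat u, Nmat_det u⟩ with hNel_def
    have hmul : C t * A t = Nel * C t := by
      apply Subtype.ext
      rw [Matrix.SpecialLinearGroup.coe_mul, Matrix.SpecialLinearGroup.coe_mul,
        hCcoe t ht]
      show (r t • Q t) * (A t : Matrix (Fin 2) (Fin 2) ℂ) = Nmat u * (r t • Q t)
      rw [Matrix.smul_mul, Matrix.mul_smul, hcomm t]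
    have : C t * A t * (C t)⁻¹ = Nel := by
      rw [hmul, mul_assoc, mul_inv_cancel, mul_one]
    rw [this]

end CuspDefAux

open CuspDefAux in
/-- **Lemma 3.4 (lem:cuspdef).**  Let `A` be a holomorphic family in `SL(2,ℂ)` on a
neighborhood of `0` with `A 0` parabolic (trace `2`, not the identity).  Then near `0`,
either `A t` is always parabolic and the family is holomorphically conjugate to the trivial
deformation, or `A t` is nonparabolic for `t ≠ 0` and the family is holomorphically
conjugate to the canonical form `!![u/2, (u² − 4)/2; 1/2, u/2]` with `u t = Tr (A t)`. -/
theorem stmt_4 (U : Set ℂ) (hUopen : IsOpen U) (hU0 : (0 : ℂ) ∈ U)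
    (A : ℂ → Matrix.SpecialLinearGroup (Fin 2) ℂ) (hA : HolomorphicSL2Family A U)
    (htr : Matrix.trace (A 0 : Matrix (Fin 2) (Fin 2) ℂ) = 2)
    (hne : A 0 ≠ 1) :
    ∃ V : Set ℂ, V ⊆ U ∧ IsOpen V ∧ (0 : ℂ) ∈ V ∧
      (((∀ t ∈ V, Matrix.trace (A t : Matrix (Fin 2) (Fin 2) ℂ) = 2) ∧
        ∃ C : ℂ → Matrix.SpecialLinearGroup (Fin 2) ℂ, HolomorphicSL2Family C V ∧
          ∀ t ∈ V, C t * A t * (C t)⁻¹ = A 0) ∨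
      ((∀ t ∈ V, t ≠ 0 → Matrix.trace (A t : Matrix (Fin 2) (Fin 2) ℂ) ≠ 2) ∧
        ∃ C : ℂ → Matrix.SpecialLinearGroup (Fin 2) ℂ, HolomorphicSL2Family C V ∧
          ∀ t ∈ V, ((C t * A t * (C t)⁻¹ : Matrix.SpecialLinearGroup (Fin 2) ℂ) :
              Matrix (Fin 2) (Fin 2) ℂ) =
            !![Matrix.trace (A t : Matrix (Fin 2) (Fin 2) ℂ) / 2,
               ((Matrix.trace (A t : Matrix (Fin 2) (Fin 2) ℂ)) ^ 2 - 4) / 2;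
               1 / 2, Matrix.trace (A t : Matrix (Fin 2) (Fin 2) ℂ) / 2])) := by
  classical
  set a : ℂ → ℂ := fun t => (A t : Matrix (Fin 2) (Fin 2) ℂ) 0 0 with ha_def
  set b : ℂ → ℂ := fun t => (A t : Matrix (Fin 2) (Fin 2) ℂ) 0 1 with hb_def
  set c : ℂ → ℂ := fun t => (A t : Matrix (Fin 2) (Fin 2) ℂ) 1 0 with hc_def
  set d : ℂ → ℂ := fun t => (A t : Matrix (Fin 2) (Fin 2) ℂ) 1 1 with hd_def
  have hdet : ∀ t, a t * d t - b t * c t = 1 := by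
    intro t
    have := (A t).2
    rwa [Matrix.det_fin_two] at this
  have htrace : ∀ t, Matrix.trace (A t : Matrix (Fin 2) (Fin 2) ℂ) = a t + d t := by
    intro t; rw [Matrix.trace_fin_two]
  -- trace analytic
  have hu : AnalyticOnNhd ℂ (fun t => Matrix.trace (A t : Matrix (Fin 2) (Fin 2) ℂ)) U := by
    have : (fun t => Matrix.trace (A t : Matrix (Fin 2) (Fin 2) ℂ)) = fun t => a t + d t := by
      funext t; exact htrace t
    rw [this]
    exact (hA 0 0).add (hA 1 1)
  -- choose the branch data
  obtain ⟨p, Q, hp, hQ, hp0, hdetQ, hcomm⟩ :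
      ∃ (p : ℂ → ℂ) (Q : ℂ → Matrix (Fin 2) (Fin 2) ℂ),
        AnalyticOnNhd ℂ p U ∧ (∀ i j, AnalyticOnNhd ℂ (fun t => Q t i j) U) ∧ p 0 ≠ 0 ∧
        (∀ t, (Q t).det = p t / 2) ∧
        (∀ t, Q t * (A t : Matrix (Fin 2) (Fin 2) ℂ)
          = Nmat (Matrix.trace (A t : Matrix (Fin 2) (Fin 2) ℂ)) * Q t) := by
    by_cases hc0 : c 0 = 0
    · -- then b 0 ≠ 0
      have hb0 : b 0 ≠ 0 := by
        intro hb0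
        apply hne
        have htr' : a 0 + d 0 = 2 := by rw [← htrace 0, htr]
        have hdet' : a 0 * d 0 - b 0 * c 0 = 1 := hdet 0
        rw [hb0, hc0] at hdet'
        have ha1 : a 0 = 1 := by
          have hsq : (a 0 - 1) ^ 2 = 0 := by linear_combination a 0 * htr' - hdet'
          have := pow_eq_zero_iff (n := 2) (by norm_num) |>.mp hsq
          exact sub_eq_zero.mp this
        have hd1 : d 0 = 1 := by linear_combination hdet' - d 0 * ha1
        apply Subtype.ext
        show (A 0 : Matrix (Fin 2) (Fin 2) ℂ) = _
        ext i j
        fin_cases i <;> fin_cases j <;>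
          simp [Matrix.SpecialLinearGroup.coe_one, Matrix.one_apply] <;>
          first
            | exact ha1
            | exact hb0
            | exact hc0
            | exact hd1
      refine ⟨fun t => -(b t), fun t => !![(d t - a t)/2, -(b t); -(1/2 : ℂ), 0],
        ?_, ?_, ?_, ?_, ?_⟩
      · exact (hA 0 1).neg
      · intro i j
        fin_cases i <;> fin_cases j <;> simp <;>
          first
            | exact ((hA 1 1).sub (hA 0 0)).div analyticOnNhd_const (fun _ _ => two_ne_zero)
            | exact (hA 0 1).neg
            | exact analyticOnNhd_const
      · simpa using hb0
      · intro t
        simp [Matrix.det_fin_two_of]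
        ring
      · intro t
        have hdt := hdet t
        simp only [ha_def, hb_def, hc_def, hd_def] at hdt ⊢
        ext i j
        fin_cases i <;> fin_cases j <;>
          simp [Nmat, Matrix.mul_apply, Fin.sum_univ_two, Matrix.trace_fin_two] <;>
          first
            | ring1
            | linear_combination hdt
            | linear_combination -hdt
            | linear_combination 2*hdt
            | linear_combination -2*hdt
            | linear_combination hdt/2
            | linear_combination -hdt/2
            | linear_combination hdt/4
            | linear_combination -hdt/4
    · refine ⟨c, fun t => !![c t, (d t - a t)/2; 0, (1/2 : ℂ)], hA 1 0, ?_, hc0, ?_, ?_⟩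
      · intro i j
        fin_cases i <;> fin_cases j <;> simp <;>
          first
            | exact ((hA 1 1).sub (hA 0 0)).div analyticOnNhd_const (fun _ _ => two_ne_zero)
            | exact hA 1 0
            | exact analyticOnNhd_const
      · intro t
        simp [Matrix.det_fin_two_of]
        ring
      · intro t
        have hdt := hdet t
        simp only [ha_def, hb_def, hc_def, hd_def] at hdt ⊢
        ext i j
        fin_cases i <;> fin_cases j <;>
          simp [Nmat, Matrix.mul_apply, Fin.sum_univ_two, Matrix.trace_fin_two] <;>
          first
            | ring1
            | linear_combination hdt
            | linear_combination -hdt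
            | linear_combination 2*hdt
            | linear_combination -2*hdt
            | linear_combination hdt/2
            | linear_combination -hdt/2
            | linear_combination hdt/4
            | linear_combination -hdt/4
  -- dichotomy for the trace
  rcases (hu 0 hU0).eventually_eq_or_eventually_ne analyticAt_const with h2 | h2
  · -- case (a) : trace ≡ 2
    obtain ⟨V, hVU, hVopen, hV0, hVE, C, hCholo, hCconj⟩ :=
      key U hUopen hU0 A p Q hp hQ hp0 hdetQ hcomm
        (fun t => Matrix.trace (A t : Matrix (Fin 2) (Fin 2) ℂ) = 2) h2
    refine ⟨V, hVU, hVopen, hV0, Or.inl ⟨hVE, fun t => (C 0)⁻¹ * C t,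
      holo_const_mul _ hCholo, ?_⟩⟩
    intro t ht
    have heqt : C t * A t * (C t)⁻¹ = C 0 * A 0 * (C 0)⁻¹ := by
      apply Subtype.ext
      rw [hCconj t ht, hCconj 0 hV0, hVE t ht, hVE 0 hV0]
    have hrw : ((C 0)⁻¹ * C t) * A t * (((C 0)⁻¹ * C t))⁻¹
        = (C 0)⁻¹ * (C t * A t * (C t)⁻¹) * C 0 := by group
    rw [hrw, heqt]
    group
  · -- case (b) : trace ≠ 2 on punctured neighborhood
    have h2' : ∀ᶠ t in nhds 0,
        t ≠ 0 → Matrix.trace (A t : Matrix (Fin 2) (Fin 2) ℂ) ≠ 2 := by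
      rw [eventually_nhdsWithin_iff] at h2
      filter_upwards [h2] with t ht htne
      exact ht (Set.mem_compl_singleton_iff.mpr htne)
    obtain ⟨V, hVU, hVopen, hV0, hVE, C, hCholo, hCconj⟩ :=
      key U hUopen hU0 A p Q hp hQ hp0 hdetQ hcomm
        (fun t => t ≠ 0 → Matrix.trace (A t : Matrix (Fin 2) (Fin 2) ℂ) ≠ 2) h2'
    refine ⟨V, hVU, hVopen, hV0, Or.inr ⟨hVE, C, hCholo, ?_⟩⟩
    intro t ht
    rw [hCconj t ht]
    rfl
end

section
/- Let U be an open connected neighborhood of 0 in ℂ and let A, B : U → SL(2,ℂ) be holomorphic families such that: for every t ∈ U, A(t) is the matrix with rows (u(t)/2, (u(t)² − 4)/2) and (1/2, u(t)/2) where u(t) = Tr A(t); u(0) = 2 and u(t)² ≠ 4 for all t ∈ U with t ≠ 0; A(t)·B(t) = B(t)·A(t) for all t ∈ U; and B(0) ≠ I and B(0) ≠ −I. Then there exist an open neighborhood V ⊆ U of 0 and a complex analytic function h : V → ℂ with h(0) ≠ 0 such that for all t ∈ V, B(t) is the matrix with rows (v(t)/2, h(t)·(u(t)² − 4)/2) and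 (h(t)/2, v(t)/2), where v(t) = Tr B(t); moreover h(t)²·(u(t)² − 4) = v(t)² − 4 for all t ∈ V. -/
open Matrix

/-- **Lemma 3.5 (lem:cuspdef1).**  Let `A, B` be holomorphic families in `SL(2,ℂ)` on a
connected open neighborhood `U` of `0` such that `A t` is in the canonical form
`!![u/2, (u² − 4)/2; 1/2, u/2]` with `u t = Tr (A t)`, `u 0 = 2`, `u t ² ≠ 4` for `t ≠ 0`,
`A t` and `B t` commute, and `B 0 ≠ ± I`.  Then near `0` there is a complex analytic
function `h` with `h 0 ≠ 0` such that `B t = !![v/2, h (u² − 4)/2; h/2, v/2]` with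
`v t = Tr (B t)`, and moreover `h² (u² − 4) = v² − 4`. -/
theorem stmt_5 (U : Set ℂ) (hUopen : IsOpen U) (hUconn : IsConnected U) (hU0 : (0 : ℂ) ∈ U)
    (A B : ℂ → Matrix.SpecialLinearGroup (Fin 2) ℂ)
    (hA : HolomorphicSL2Family A U) (hB : HolomorphicSL2Family B U)
    (hform : ∀ t ∈ U, ((A t : Matrix (Fin 2) (Fin 2) ℂ)) =
      !![Matrix.trace (A t : Matrix (Fin 2) (Fin 2) ℂ) / 2,
         ((Matrix.trace (A t : Matrix (Fin 2) (Fin 2) ℂ)) ^ 2 - 4) / 2;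
         1 / 2, Matrix.trace (A t : Matrix (Fin 2) (Fin 2) ℂ) / 2])
    (hu0 : Matrix.trace (A 0 : Matrix (Fin 2) (Fin 2) ℂ) = 2)
    (hune : ∀ t ∈ U, t ≠ 0 → (Matrix.trace (A t : Matrix (Fin 2) (Fin 2) ℂ)) ^ 2 ≠ 4)
    (hcomm : ∀ t ∈ U, A t * B t = B t * A t)
    (hB0 : (B 0 : Matrix (Fin 2) (Fin 2) ℂ) ≠ 1 ∧ (B 0 : Matrix (Fin 2) (Fin 2) ℂ) ≠ -1) :
    ∃ V : Set ℂ, V ⊆ U ∧ IsOpen V ∧ (0 : ℂ) ∈ V ∧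
      ∃ h : ℂ → ℂ, AnalyticOnNhd ℂ h V ∧ h 0 ≠ 0 ∧
        ∀ t ∈ V,
          ((B t : Matrix (Fin 2) (Fin 2) ℂ)) =
            !![Matrix.trace (B t : Matrix (Fin 2) (Fin 2) ℂ) / 2,
               h t * ((Matrix.trace (A t : Matrix (Fin 2) (Fin 2) ℂ)) ^ 2 - 4) / 2;
               h t / 2, Matrix.trace (B t : Matrix (Fin 2) (Fin 2) ℂ) / 2] ∧
          (h t) ^ 2 * ((Matrix.trace (A t : Matrix (Fin 2) (Fin 2) ℂ)) ^ 2 - 4) =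
            (Matrix.trace (B t : Matrix (Fin 2) (Fin 2) ℂ)) ^ 2 - 4 := by

  refine ⟨U, subset_rfl, hUopen, hU0,
    fun t => 2 * ((B t : Matrix (Fin 2) (Fin 2) ℂ) 1 0), ?_, ?_, ?_⟩
  · exact fun t ht => (analyticAt_const.mul ((hB 1 0) t ht))
  case _ =>
    have key : ∀ t ∈ U,
        (B t : Matrix (Fin 2) (Fin 2) ℂ) 1 1 = (B t : Matrix (Fin 2) (Fin 2) ℂ) 0 0 ∧
        (B t : Matrix (Fin 2) (Fin 2) ℂ) 0 1 =
          ((Matrix.trace (A t : Matrix (Fin 2) (Fin 2) ℂ)) ^ 2 - 4) *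
            (B t : Matrix (Fin 2) (Fin 2) ℂ) 1 0 := by
      intro t ht
      have heq : (A t : Matrix (Fin 2) (Fin 2) ℂ) * (B t : Matrix (Fin 2) (Fin 2) ℂ)
          = (B t : Matrix (Fin 2) (Fin 2) ℂ) * (A t : Matrix (Fin 2) (Fin 2) ℂ) := by
        have := congrArg (Subtype.val) (hcomm t ht)
        simpa using this
      rw [hform t ht] at heq
      have h10 := congrFun (congrFun heq 1) 0
      have h00 := congrFun (congrFun heq 0) 0
      simp [Matrix.mul_apply, Fin.sum_univ_two] at h10 h00
      constructor
      · linear_combination (-2 : ℂ) * h10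
      · linear_combination (-2 : ℂ) * h00
    intro hcon
    have hc0 : (B 0 : Matrix (Fin 2) (Fin 2) ℂ) 1 0 = 0 := by
      have h2 : (2 : ℂ) * (B 0 : Matrix (Fin 2) (Fin 2) ℂ) 1 0 = 0 := hcon
      simpa using h2
    obtain ⟨k1, k2⟩ := key 0 hU0
    have hb0 : (B 0 : Matrix (Fin 2) (Fin 2) ℂ) 0 1 = 0 := by rw [k2, hc0, mul_zero]
    have hdet := (B 0).2
    rw [Matrix.det_fin_two] at hdet
    rw [k1, hb0, hc0] at hdet
    have ha : (B 0 : Matrix (Fin 2) (Fin 2) ℂ) 0 0 = 1 ∨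
        (B 0 : Matrix (Fin 2) (Fin 2) ℂ) 0 0 = -1 := by
      have : ((B 0 : Matrix (Fin 2) (Fin 2) ℂ) 0 0 - 1) *
          ((B 0 : Matrix (Fin 2) (Fin 2) ℂ) 0 0 + 1) = 0 := by ring_nf; linear_combination hdet
      rcases mul_eq_zero.mp this with h | h
      · left; linear_combination h
      · right; linear_combination h
    rcases ha with ha | ha
    · exact hB0.1 (by ext i j; fin_cases i <;> fin_cases j <;>
        simp [ha, hb0, hc0, k1, Matrix.one_apply])
    · exact hB0.2 (by ext i j; fin_cases i <;> fin_cases j <;>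
        simp [ha, hb0, hc0, k1, Matrix.one_apply])
  case _ =>
    intro t ht
    have key :
        (B t : Matrix (Fin 2) (Fin 2) ℂ) 1 1 = (B t : Matrix (Fin 2) (Fin 2) ℂ) 0 0 ∧
        (B t : Matrix (Fin 2) (Fin 2) ℂ) 0 1 =
          ((Matrix.trace (A t : Matrix (Fin 2) (Fin 2) ℂ)) ^ 2 - 4) *
            (B t : Matrix (Fin 2) (Fin 2) ℂ) 1 0 := by
      have heq : (A t : Matrix (Fin 2) (Fin 2) ℂ) * (B t : Matrix (Fin 2) (Fin 2) ℂ)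
          = (B t : Matrix (Fin 2) (Fin 2) ℂ) * (A t : Matrix (Fin 2) (Fin 2) ℂ) := by
        have := congrArg (Subtype.val) (hcomm t ht)
        simpa using this
      rw [hform t ht] at heq
      have h10 := congrFun (congrFun heq 1) 0
      have h00 := congrFun (congrFun heq 0) 0
      simp [Matrix.mul_apply, Fin.sum_univ_two] at h10 h00
      constructor
      · linear_combination (-2 : ℂ) * h10
      · linear_combination (-2 : ℂ) * h00
    obtain ⟨k1, k2⟩ := key
    have htr : Matrix.trace (B t : Matrix (Fin 2) (Fin 2) ℂ)
        = 2 * (B t : Matrix (Fin 2) (Fin 2) ℂ) 0 0 := by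
      rw [Matrix.trace_fin_two, k1]; ring
    have hdet := (B t).2
    rw [Matrix.det_fin_two] at hdet
    constructor
    · ext i j
      fin_cases i <;> fin_cases j <;> simp [htr, k1, k2] <;> ring
    · rw [htr]
      rw [k1, k2] at hdet
      linear_combination (-4 : ℂ) * hdet
end

section
/- Let u, v, h be complex analytic functions on an open neighborhood of 0 in ℂ satisfying h(t)²·(u(t)² − 4) = v(t)² − 4 for all t in that neighborhood, with u(0) = 2, v(0) = 2 and h(0) ≠ 0. Then v'(0) = h(0)²·u'(0); in particular, if u'(0) ≠ 0 then v'(0) ≠ 0. -/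
/-- **Analytic core of Proposition 3.6 (prop:cuspdefok).**  If `u, v, h` are complex
analytic on an open neighborhood `U` of `0` with `h² (u² − 4) = v² − 4` on `U`,
`u 0 = 2`, `v 0 = 2` and `h 0 ≠ 0`, then `v' 0 = h 0 ² · u' 0`; in particular,
`u' 0 ≠ 0` implies `v' 0 ≠ 0`. -/
theorem stmt_6 (U : Set ℂ) (hUopen : IsOpen U) (hU0 : (0 : ℂ) ∈ U) (u v h : ℂ → ℂ)
    (hu : AnalyticOnNhd ℂ u U) (hv : AnalyticOnNhd ℂ v U) (hh : AnalyticOnNhd ℂ h U)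
    (hrel : ∀ t ∈ U, (h t) ^ 2 * ((u t) ^ 2 - 4) = (v t) ^ 2 - 4)
    (hu0 : u 0 = 2) (hv0 : v 0 = 2) (hh0 : h 0 ≠ 0) :
    deriv v 0 = (h 0) ^ 2 * deriv u 0 ∧ (deriv u 0 ≠ 0 → deriv v 0 ≠ 0) := by
  have hdu : HasDerivAt u (deriv u 0) 0 := (hu 0 hU0).differentiableAt.hasDerivAt
  have hdv : HasDerivAt v (deriv v 0) 0 := (hv 0 hU0).differentiableAt.hasDerivAt
  have hdh : HasDerivAt h (deriv h 0) 0 := (hh 0 hU0).differentiableAt.hasDerivAt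
  have hF : HasDerivAt (fun t => h t ^ 2 * (u t ^ 2 - 4))
      ((2 * h 0 ^ 1 * deriv h 0) * (u 0 ^ 2 - 4)
        + h 0 ^ 2 * (2 * u 0 ^ 1 * deriv u 0)) 0 :=
    (hdh.pow 2).mul ((hdu.pow 2).sub_const 4)
  have hG : HasDerivAt (fun t => v t ^ 2 - 4) (2 * v 0 ^ 1 * deriv v 0) 0 :=
    (hdv.pow 2).sub_const 4
  have heq : (fun t => h t ^ 2 * (u t ^ 2 - 4)) =ᶠ[nhds (0 : ℂ)]
      (fun t => v t ^ 2 - 4) := by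
    filter_upwards [hUopen.mem_nhds hU0] with t ht using hrel t ht
  have hF' : HasDerivAt (fun t => v t ^ 2 - 4)
      ((2 * h 0 ^ 1 * deriv h 0) * (u 0 ^ 2 - 4)
        + h 0 ^ 2 * (2 * u 0 ^ 1 * deriv u 0)) 0 := hF.congr_of_eventuallyEq heq.symm
  have key := hF'.unique hG
  rw [hu0, hv0] at key
  have hmain : deriv v 0 = h 0 ^ 2 * deriv u 0 := by
    have key' : deriv v 0 * 4 = h 0 ^ 2 * deriv u 0 * 4 := by linear_combination -key
    exact mul_right_cancel₀ (by norm_num : (4 : ℂ) ≠ 0) key'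
  exact ⟨hmain, fun hne => by simp [hmain, hne, pow_eq_zero_iff, hh0]⟩
end

section
/- Let U ⊆ ℂ be a connected open set and let A, B : U → SL(2,ℂ) be continuous families of matrices such that A(t)·B(t) = B(t)·A(t) for all t ∈ U, Tr A(t) = 2 and A(t) ≠ I for all t ∈ U. If Tr B(t₀) = 2 for some t₀ ∈ U, then Tr B(t) = 2 for all t ∈ U. -/
open Matrix

/-- A family of matrices in `SL(2,ℂ)` parameterized by a set `U ⊆ ℂ` is continuous if each
of its four entries is a continuous function on `U`. -/
def ContinuousSL2Family (A : ℂ → Matrix.SpecialLinearGroup (Fin 2) ℂ) (U : Set ℂ) : Prop :=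
  ∀ i j, ContinuousOn (fun t => ((A t : Matrix (Fin 2) (Fin 2) ℂ) i j)) U

lemma key_aux_s7 (M N : Matrix.SpecialLinearGroup (Fin 2) ℂ)
    (hc : M * N = N * M)
    (htr : Matrix.trace (M : Matrix (Fin 2) (Fin 2) ℂ) = 2)
    (hne : M ≠ 1) :
    Matrix.trace (N : Matrix (Fin 2) (Fin 2) ℂ) = 2 ∨
      Matrix.trace (N : Matrix (Fin 2) (Fin 2) ℂ) = -2 := by
  set a := (M : Matrix (Fin 2) (Fin 2) ℂ) 0 0 with ha
  set b := (M : Matrix (Fin 2) (Fin 2) ℂ) 0 1 with hb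
  set c := (M : Matrix (Fin 2) (Fin 2) ℂ) 1 0 with hc'
  set d := (M : Matrix (Fin 2) (Fin 2) ℂ) 1 1 with hd
  set p := (N : Matrix (Fin 2) (Fin 2) ℂ) 0 0 with hp
  set q := (N : Matrix (Fin 2) (Fin 2) ℂ) 0 1 with hq
  set r := (N : Matrix (Fin 2) (Fin 2) ℂ) 1 0 with hr
  set s := (N : Matrix (Fin 2) (Fin 2) ℂ) 1 1 with hs
  have hdetM : a * d - b * c = 1 := by
    have := M.property; rwa [Matrix.det_fin_two] at this
  have hdetN : p * s - q * r = 1 := by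
    have := N.property; rwa [Matrix.det_fin_two] at this
  have htr' : a + d = 2 := by rwa [Matrix.trace_fin_two] at htr
  have hcm : (M : Matrix (Fin 2) (Fin 2) ℂ) * N = (N : Matrix (Fin 2) (Fin 2) ℂ) * M := by
    have := congrArg (fun X : Matrix.SpecialLinearGroup (Fin 2) ℂ =>
      (X : Matrix (Fin 2) (Fin 2) ℂ)) hc
    simpa using this
  have e01 : a * q + b * s = p * b + q * d := by
    have := congrFun (congrFun hcm 0) 1
    simpa [Matrix.mul_apply, Fin.sum_univ_two] using this
  have e10 : c * p + d * r = r * a + s * c := by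
    have := congrFun (congrFun hcm 1) 0
    simpa [Matrix.mul_apply, Fin.sum_univ_two] using this
  have e00 : a * p + b * r = p * a + q * c := by
    have := congrFun (congrFun hcm 0) 0
    simpa [Matrix.mul_apply, Fin.sum_univ_two] using this
  have hx : (a - d) ^ 2 + 4 * b * c = 0 := by
    linear_combination (a + d + 2) * htr' - 4 * hdetM - 8
  -- key identity: (p - s)^2 + 4 q r = 0
  have hkey : (p - s) ^ 2 + 4 * q * r = 0 := by
    by_cases hb0 : b = 0
    · -- then (a-d)^2 = 0, so a = d = 1, and c ≠ 0 since M ≠ 1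
      have had : a = d := by
        have : (a - d) ^ 2 = 0 := by linear_combination hx - 4 * c * hb0
        have := pow_eq_zero_iff (n := 2) (by norm_num) |>.mp this
        exact sub_eq_zero.mp this
      have ha1 : a = 1 := by linear_combination (htr' + had) / 2 - 1
      have hd1 : d = 1 := by linear_combination htr' - ha1 - 1
      have hc0 : c ≠ 0 := by
        intro hc0
        apply hne
        apply Subtype.ext
        show (M : Matrix (Fin 2) (Fin 2) ℂ) = 1
        rw [Matrix.eta_fin_two (M : Matrix (Fin 2) (Fin 2) ℂ), ← ha, ← hb, ← hc', ← hd,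
          ha1, hb0, hc0, hd1, Matrix.one_fin_two]
      have hps : p = s := by
        have : c * (p - s) = 0 := by
          linear_combination e10 + r * had
        rcases mul_eq_zero.mp this with h | h
        · exact absurd h hc0
        · exact sub_eq_zero.mp h
      have hq0 : q = 0 := by
        have : q * c = 0 := by linear_combination -e00 + r * hb0
        rcases mul_eq_zero.mp this with h | h
        · exact h
        · exact absurd h hc0
      rw [hps, hq0]; ring
    · have h1 : b * (p - s) = q * (a - d) := by linear_combination -e01
      have h2 : b * r = q * c := by linear_combination e00
      have hb2 : b ^ 2 * ((p - s) ^ 2 + 4 * q * r) = 0 := by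
        linear_combination (b * (p - s) + q * (a - d)) * h1 + 4 * b * q * h2 + q ^ 2 * hx
      rcases mul_eq_zero.mp hb2 with h | h
      · exact absurd (pow_eq_zero_iff (by norm_num) |>.mp h) hb0
      · exact h
  have hsq : (p + s) ^ 2 = 4 := by linear_combination hkey + 4 * hdetN
  have h22 : (p + s - 2) * (p + s + 2) = 0 := by linear_combination hsq
  rcases mul_eq_zero.mp h22 with h | h
  · left; rw [Matrix.trace_fin_two]; linear_combination h
  · right; rw [Matrix.trace_fin_two]; linear_combination h

/-- **Second claim underlying Proposition 3.6 (prop:cuspdefok).**  Let `A, B` be continuous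
commuting families in `SL(2,ℂ)` on a connected open set `U ⊆ ℂ` with `A t` parabolic
(trace `2`, not the identity) for all `t ∈ U`.  If `Tr (B t₀) = 2` for some `t₀ ∈ U`, then
`Tr (B t) = 2` for all `t ∈ U`. -/
theorem stmt_7 (U : Set ℂ) (hUopen : IsOpen U) (hUconn : IsConnected U)
    (A B : ℂ → Matrix.SpecialLinearGroup (Fin 2) ℂ)
    (hA : ContinuousSL2Family A U) (hB : ContinuousSL2Family B U)
    (hcomm : ∀ t ∈ U, A t * B t = B t * A t)
    (htrA : ∀ t ∈ U, Matrix.trace (A t : Matrix (Fin 2) (Fin 2) ℂ) = 2)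
    (hAne : ∀ t ∈ U, A t ≠ 1)
    (t₀ : ℂ) (ht₀ : t₀ ∈ U) (htrB : Matrix.trace (B t₀ : Matrix (Fin 2) (Fin 2) ℂ) = 2) :
    ∀ t ∈ U, Matrix.trace (B t : Matrix (Fin 2) (Fin 2) ℂ) = 2 := by
  set f : ℂ → ℂ := fun t => Matrix.trace (B t : Matrix (Fin 2) (Fin 2) ℂ) with hf
  have hfc : ContinuousOn f U := by
    have : f = fun t => ((B t : Matrix (Fin 2) (Fin 2) ℂ) 0 0) +
        ((B t : Matrix (Fin 2) (Fin 2) ℂ) 1 1) := by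
      funext t; simp [hf, Matrix.trace_fin_two]
    rw [this]
    exact (hB 0 0).add (hB 1 1)
  have hval : ∀ t ∈ U, f t = 2 ∨ f t = -2 := fun t ht =>
    key_aux_s7 (A t) (B t) (hcomm t ht) (htrA t ht) (hAne t ht)
  -- the image of U under f is a connected subset of {2, -2}
  set u : Set ℂ := {z | 0 < z.re} with hu
  set v : Set ℂ := {z | z.re < 0} with hv
  have huo : IsOpen u := isOpen_lt (continuous_const (y := (0:ℝ))) Complex.continuous_re
  have hvo : IsOpen v := isOpen_lt Complex.continuous_re (continuous_const (y := (0:ℝ)))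
  have hdisj : Disjoint u v := by
    rw [Set.disjoint_left]
    intro z hz hz'
    simp only [hu, hv, Set.mem_setOf_eq] at hz hz'
    linarith
  have himg : IsPreconnected (f '' U) := hUconn.isPreconnected.image f hfc
  have hsub : f '' U ⊆ u ∪ v := by
    rintro z ⟨t, ht, rfl⟩
    rcases hval t ht with h | h
    · left; rw [h]; norm_num [hu]
    · right; rw [h]; norm_num [hv]
  rcases himg.subset_or_subset huo hvo hdisj hsub with h | h
  · intro t ht
    rcases hval t ht with h2 | h2
    · exact h2
    · exfalso
      have : f t ∈ u := h ⟨t, ht, rfl⟩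
      rw [h2] at this
      norm_num [hu] at this
  · exfalso
    have : f t₀ ∈ v := h ⟨t₀, ht₀, rfl⟩
    rw [hf] at this
    simp only [htrB] at this
    norm_num [hv] at this
end
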